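/- In the setting of a Manin triple L × L^‡ = D ⊕ W with W commensurable with W°, let V_± ⊆ L be the preimages of the projections W_± under the isomorphisms L → L_±. Then L = V_+ + V_−, and the linear map V_+ ∩ V_− → (W_+ × W_−)/W, f ↦ class of (f, f^‡), is an isomorphism of vector spaces. -/

import Mathlib

open TensorProduct LaurentPolynomial

set_option maxSynthPendingDepth 3

noncomputable section

/-- The `ε^k`-eigenspace of the automorphism `σ`. -/
def eigSp {g : Type*} [LieRing g] [LieAlgebra ℂ g]
    (σ : g ≃ₗ⁅ℂ⁆ g) (ε : ℂ) (k : ℤ) : Submodule ℂ g :=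
  LinearMap.ker (σ.toLinearEquiv.toLinearMap - ε ^ k • LinearMap.id)

variable (g : Type*) [LieRing g] [LieAlgebra ℂ g]

/-- The full loop algebra `g[z, z⁻¹] = ℂ[z,z⁻¹] ⊗ g`. -/
abbrev LoopAlg := LaurentPolynomial ℂ ⊗[ℂ] g

/-- The residue pairing on `ℂ[z,z⁻¹]`: `(p, q) ↦` coefficient of `z⁰` in `p·q`. -/
def resPair : LinearMap.BilinForm ℂ (LaurentPolynomial ℂ) :=
  LinearMap.mk₂ ℂ (fun p q => (p * q).coeff 0)
    (fun p p' q => by (try simp only []); rw [add_mul, AddMonoidAlgebra.coeff_add]; exact Finsupp.add_apply _ _ 0)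
    (fun c p q => by (try simp only []); rw [smul_mul_assoc, AddMonoidAlgebra.coeff_smul]; exact Finsupp.smul_apply c _ 0)
    (fun p q q' => by (try simp only []); rw [mul_add, AddMonoidAlgebra.coeff_add]; exact Finsupp.add_apply _ _ 0)
    (fun c p q => by (try simp only []); rw [mul_smul_comm, AddMonoidAlgebra.coeff_smul]; exact Finsupp.smul_apply c _ 0)

/-- The standard bilinear form `B(a z^k, b z^l) = κ(a,b) δ_{k+l,0}` on the loop algebra. -/
def loopForm : LinearMap.BilinForm ℂ (LoopAlg g) :=
  LinearMap.BilinForm.tmul (resPair) (killingForm ℂ g)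

/-- The dagger map `a z^k ↦ a z^{−k}`, an isometric Lie algebra isomorphism
`L(g,σ) → L(g,σ⁻¹)`. -/
def daggerMap : LoopAlg g →ₗ[ℂ] LoopAlg g :=
  TensorProduct.map (LaurentPolynomial.invert (R := ℂ)).toLinearMap LinearMap.id

/-- The bilinear form `F((f₊,f₋),(g₊,g₋)) = B(f₊,g₊) − B(f₋,g₋)` on `L × L^‡`. -/
def prodForm : LinearMap.BilinForm ℂ (LoopAlg g × LoopAlg g) :=
  ((loopForm g).compl₁₂ (LinearMap.fst ℂ (LoopAlg g) (LoopAlg g))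
      (LinearMap.fst ℂ (LoopAlg g) (LoopAlg g))) -
  ((loopForm g).compl₁₂ (LinearMap.snd ℂ (LoopAlg g) (LoopAlg g))
      (LinearMap.snd ℂ (LoopAlg g) (LoopAlg g)))

variable {g}

/-- The degree `k` component `g_k z^k` of the twisted loop algebra `L(g,σ)`. -/
def loopComp (σ : g ≃ₗ⁅ℂ⁆ g) (ε : ℂ) (k : ℤ) : Submodule ℂ (LoopAlg g) :=
  Submodule.map (TensorProduct.mk ℂ (LaurentPolynomial ℂ) g (T k)) (eigSp σ ε k)

/-- The degree `k` component `g_k^‡ z^k` of the twisted loop algebra `L(g,σ⁻¹)`. -/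
def loopCompDag (σ : g ≃ₗ⁅ℂ⁆ g) (ε : ℂ) (k : ℤ) : Submodule ℂ (LoopAlg g) :=
  Submodule.map (TensorProduct.mk ℂ (LaurentPolynomial ℂ) g (T k)) (eigSp σ ε (-k))

/-- The twisted loop algebra `L(g,σ) = ⊕_{k∈ℤ} g_k z^k`. -/
def loopCarrier (σ : g ≃ₗ⁅ℂ⁆ g) (ε : ℂ) : Submodule ℂ (LoopAlg g) :=
  ⨆ k : ℤ, loopComp σ ε k

/-- The twisted loop algebra `L^‡ = L(g,σ⁻¹) = ⊕_{k∈ℤ} g_k^‡ z^k`. -/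
def loopDagCarrier (σ : g ≃ₗ⁅ℂ⁆ g) (ε : ℂ) : Submodule ℂ (LoopAlg g) :=
  ⨆ k : ℤ, loopCompDag σ ε k

/-- `L_{≥ n} = t^n·L_{≥0}` inside `L(g,σ)`. -/
def loopGe (σ : g ≃ₗ⁅ℂ⁆ g) (ε : ℂ) (m : ℕ) (n : ℤ) : Submodule ℂ (LoopAlg g) :=
  ⨆ j : ℤ, ⨆ _ : n * (m : ℤ) ≤ j, loopComp σ ε j

/-- `L^‡_{≥ n}` inside `L(g,σ⁻¹)`. -/
def loopGeDag (σ : g ≃ₗ⁅ℂ⁆ g) (ε : ℂ) (m : ℕ) (n : ℤ) : Submodule ℂ (LoopAlg g) :=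
  ⨆ j : ℤ, ⨆ _ : n * (m : ℤ) ≤ j, loopCompDag σ ε j

/-- The diagonal `D = {(f, f^‡) | f ∈ L}` in `L × L^‡`. -/
def loopDiag (σ : g ≃ₗ⁅ℂ⁆ g) (ε : ℂ) : Submodule ℂ (LoopAlg g × LoopAlg g) :=
  Submodule.map (LinearMap.prod LinearMap.id (daggerMap g)) (loopCarrier σ ε)

/-- The standard complementary Lagrangian subalgebra `W°`, attached to a triangular
decomposition `g₀ = g₀⁺ ⊕ h ⊕ g₀⁻`:
`W° = {(f₊,f₋) ∈ B₊ × B₋ | π₊(f₊) + π₋(f₋) = 0}`. -/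
def stdW (σ : g ≃ₗ⁅ℂ⁆ g) (ε : ℂ) (gp hC gm : Submodule ℂ g) :
    Submodule ℂ (LoopAlg g × LoopAlg g) :=
  ((Submodule.map (TensorProduct.mk ℂ (LaurentPolynomial ℂ) g (T 0)) gp ⊔
      (⨆ j : ℤ, ⨆ _ : 1 ≤ j, loopComp σ ε j)).prod ⊥) ⊔
  (Submodule.prod ⊥ (Submodule.map (TensorProduct.mk ℂ (LaurentPolynomial ℂ) g (T 0)) gm ⊔
      (⨆ j : ℤ, ⨆ _ : 1 ≤ j, loopCompDag σ ε j))) ⊔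
  Submodule.map
    (LinearMap.prod (TensorProduct.mk ℂ (LaurentPolynomial ℂ) g (T 0))
      (-(TensorProduct.mk ℂ (LaurentPolynomial ℂ) g (T 0)))) hC

/-- Commensurability of two subspaces: `(W' + W'')/(W' ∩ W'')` is finite dimensional. -/
def Commens {k V : Type*} [Field k] [AddCommGroup V] [Module k V]
    (W' W'' : Submodule k V) : Prop :=
  FiniteDimensional k (↥(W' ⊔ W'') ⧸ Submodule.comap (W' ⊔ W'').subtype (W' ⊓ W''))

end

/-! With `δ = (·)^‡`, the diagonal `D` is the graph of `δ` over `L`, and everything follows from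
`L × L^‡ = D ⊕ W`. Decomposing `(f, 0) = (x, δ x) + w` gives `f = w₊ + x` with `x ∈ V₋`,
so `L = V₊ + V₋`. Decomposing `y = (x, δ x) + w` for `y ∈ W₊ × W₋` gives `x = y₊ - w₊ ∈ V₊`,
`δ x = y₋ - w₋ ∈ W₋` and `y ≡ (x, δ x) mod W`: the map is onto. It is injective because
`D ∩ W = 0`. -/

section ManinTriple

variable {R A B : Type*} [Ring R] [AddCommGroup A] [Module R A] [AddCommGroup B] [Module R B]
  {δ : A →ₗ[R] B} {L : Submodule R A} {L' : Submodule R B} {W : Submodule R (A × B)}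

theorem le_prod_of_map_prod_sup_eq (hsup : L.map (LinearMap.id.prod δ) ⊔ W = L.prod L') :
    W ≤ L.prod L' :=
  hsup ▸ le_sup_right

theorem exists_add_eq_of_map_prod_sup_eq (hsup : L.map (LinearMap.id.prod δ) ⊔ W = L.prod L')
    {p : A × B} (hp : p ∈ L.prod L') : ∃ x ∈ L, ∃ w ∈ W, (x, δ x) + w = p := by
  rw [← hsup] at hp
  obtain ⟨_, ⟨x, hx, rfl⟩, w, hw, hxw⟩ := Submodule.mem_sup.mp hp
  exact ⟨x, hx, w, hw, hxw⟩

theorem map_fst_sup_inf_comap_map_snd_eq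
    (hsup : L.map (LinearMap.id.prod δ) ⊔ W = L.prod L') :
    W.map (LinearMap.fst R A B) ⊔ (L ⊓ (W.map (LinearMap.snd R A B)).comap δ) = L := by
  refine le_antisymm (sup_le ?_ inf_le_left) fun f hf => ?_
  · rintro _ ⟨w, hw, rfl⟩
    exact (le_prod_of_map_prod_sup_eq hsup hw).1
  · obtain ⟨x, hx, w, hw, hxw⟩ :=
      exists_add_eq_of_map_prod_sup_eq hsup (p := (f, 0)) ⟨hf, L'.zero_mem⟩
    obtain ⟨hfst, hsnd⟩ := Prod.ext_iff.mp hxw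
    have hδx : δ x = -w.2 := eq_neg_of_add_eq_zero_left hsnd
    refine Submodule.mem_sup.mpr ⟨w.1, ⟨w, hw, rfl⟩, x, ⟨hx, ?_⟩, ?_⟩
    · exact Submodule.mem_comap.mpr (hδx ▸ Submodule.neg_mem _ ⟨w, hw, rfl⟩)
    · rw [add_comm]
      exact hfst

variable (δ L W)

/-- The map `V₊ ∩ V₋ → (W₊ × W₋)/W`, `f ↦ (f, δ f) mod W`. -/
def diagToQuot :
    ↥(W.map (LinearMap.fst R A B) ⊓ (L ⊓ (W.map (LinearMap.snd R A B)).comap δ)) →ₗ[R]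
      ↥((W.map (LinearMap.fst R A B)).prod (W.map (LinearMap.snd R A B))) ⧸
        W.comap ((W.map (LinearMap.fst R A B)).prod (W.map (LinearMap.snd R A B))).subtype :=
  Submodule.mkQ _ ∘ₗ LinearMap.codRestrict _
    ((LinearMap.id.prod δ) ∘ₗ Submodule.subtype _) fun x => ⟨x.2.1, x.2.2.2⟩

variable {δ L W}

theorem diagToQuot_apply
    (x : ↥(W.map (LinearMap.fst R A B) ⊓ (L ⊓ (W.map (LinearMap.snd R A B)).comap δ)))
    (y : ↥((W.map (LinearMap.fst R A B)).prod (W.map (LinearMap.snd R A B))))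
    (hy : (y : A × B) = ((x : A), δ x)) :
    diagToQuot δ L W x = Submodule.Quotient.mk y :=
  congrArg Submodule.Quotient.mk (Subtype.ext hy.symm)

theorem diagToQuot_injective (hdisj : Disjoint (L.map (LinearMap.id.prod δ)) W) :
    Function.Injective (diagToQuot δ L W) := by
  rw [← LinearMap.ker_eq_bot, LinearMap.ker_eq_bot']
  intro x hx
  have hxW := (Submodule.Quotient.mk_eq_zero _).mp hx
  have hxD : ((x : A), δ x) ∈ L.map (LinearMap.id.prod δ) := ⟨x, x.2.2.1, rfl⟩
  exact Subtype.ext (congrArg Prod.fst (Submodule.disjoint_def.mp hdisj _ hxD hxW))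

theorem diagToQuot_surjective (hsup : L.map (LinearMap.id.prod δ) ⊔ W = L.prod L') :
    Function.Surjective (diagToQuot δ L W) := by
  intro q
  obtain ⟨y, rfl⟩ := Submodule.Quotient.mk_surjective _ q
  obtain ⟨⟨w₁, hw₁, hy₁⟩, ⟨w₂, hw₂, hy₂⟩⟩ := y.2
  have hWL := le_prod_of_map_prod_sup_eq hsup
  obtain ⟨x, hx, w, hw, hxw⟩ := exists_add_eq_of_map_prod_sup_eq hsup
    (p := (y : A × B)) ⟨hy₁ ▸ (hWL hw₁).1, hy₂ ▸ (hWL hw₂).2⟩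
  have hx_fst : x = (y : A × B).1 - w.1 := by rw [← hxw]; simp
  have hx_snd : δ x = (y : A × B).2 - w.2 := by rw [← hxw]; simp
  have hxV : x ∈ W.map (LinearMap.fst R A B) ⊓ (L ⊓ (W.map (LinearMap.snd R A B)).comap δ) :=
    ⟨hx_fst ▸ Submodule.sub_mem _ y.2.1 ⟨w, hw, rfl⟩, hx,
      Submodule.mem_comap.mpr (hx_snd ▸ Submodule.sub_mem _ y.2.2 ⟨w, hw, rfl⟩)⟩
  refine ⟨⟨x, hxV⟩, (Submodule.Quotient.eq _).mpr ?_⟩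
  show ((x, δ x) - (y : A × B)) ∈ W
  rw [← hxw, sub_add_cancel_left]
  exact W.neg_mem hw

end ManinTriple

theorem maninTriple_V_sum_and_quotient_general
    {g : Type*} [LieRing g] [LieAlgebra ℂ g]
    (σ : g ≃ₗ⁅ℂ⁆ g)
    (ε : ℂ)
    -- the Manin triple M = D ∔ W
    (W : Submodule ℂ (LoopAlg g × LoopAlg g))
    (hdisj : Disjoint (loopDiag σ ε) W)
    (hsup : loopDiag σ ε ⊔ W = (loopCarrier σ ε).prod (loopDagCarrier σ ε)) :
    Submodule.map (LinearMap.fst ℂ _ _) W ⊔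
      (loopCarrier σ ε ⊓ Submodule.comap (daggerMap g) (Submodule.map (LinearMap.snd ℂ _ _) W))
      = loopCarrier σ ε ∧
    ∃ e : ↥(Submodule.map (LinearMap.fst ℂ _ _) W ⊓
            (loopCarrier σ ε ⊓
              Submodule.comap (daggerMap g) (Submodule.map (LinearMap.snd ℂ _ _) W))) ≃ₗ[ℂ]
          (↥((Submodule.map (LinearMap.fst ℂ _ _) W).prod
              (Submodule.map (LinearMap.snd ℂ _ _) W)) ⧸
            Submodule.comap ((Submodule.map (LinearMap.fst ℂ _ _) W).prod
              (Submodule.map (LinearMap.snd ℂ _ _) W)).subtype W),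
      ∀ (x : ↥(Submodule.map (LinearMap.fst ℂ _ _) W ⊓
            (loopCarrier σ ε ⊓
              Submodule.comap (daggerMap g) (Submodule.map (LinearMap.snd ℂ _ _) W))))
        (y : ↥((Submodule.map (LinearMap.fst ℂ _ _) W).prod
              (Submodule.map (LinearMap.snd ℂ _ _) W))),
        (y : LoopAlg g × LoopAlg g) = ((x : LoopAlg g), daggerMap g (x : LoopAlg g)) →
          e x = Submodule.Quotient.mk y := by
  exact ⟨map_fst_sup_inf_comap_map_snd_eq hsup,
    LinearEquiv.ofBijective _ ⟨diagToQuot_injective hdisj, diagToQuot_surjective hsup⟩,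
    diagToQuot_apply⟩

/-- In the setting of a Manin triple `L × L^‡ = D ∔ W` with `W` commensurable
with `W°`, let `V_± ⊆ L` be the preimages of the projections `W_±` under the isomorphisms
`L → L_±`.  Then `L = V₊ + V₋`, and `f ↦ (f, f^‡) mod W` is an isomorphism
`V₊ ∩ V₋ ≅ (W₊ × W₋)/W`. -/
theorem maninTriple_V_sum_and_quotient
    {g : Type*} [LieRing g] [LieAlgebra ℂ g]
    [Module.Finite ℂ g] [LieAlgebra.IsSimple ℂ g]
    (m : ℕ) (hm : 0 < m)
    (σ : g ≃ₗ⁅ℂ⁆ g) (hσ : ∀ x : g, (⇑σ)^[m] x = x)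
    (ε : ℂ) (hε : IsPrimitiveRoot ε m)
    -- a triangular decomposition g₀ = g₀⁺ ⊕ h ⊕ g₀⁻
    (gp hC gm : Submodule ℂ g)
    (hdec : gp ⊔ hC ⊔ gm = eigSp σ ε 0)
    (hd1 : Disjoint gp (hC ⊔ gm)) (hd2 : Disjoint hC gm)
    -- the Manin triple M = D ∔ W
    (W : Submodule ℂ (LoopAlg g × LoopAlg g))
    (hWsub : W ≤ (loopCarrier σ ε).prod (loopDagCarrier σ ε))
    (hWlie : ∀ x ∈ W, ∀ y ∈ W, (⁅Prod.fst x, Prod.fst y⁆, ⁅Prod.snd x, Prod.snd y⁆) ∈ W)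
    (hWiso : ∀ x ∈ W, ∀ y ∈ W, prodForm g x y = 0)
    (hWcoiso : ∀ x ∈ (loopCarrier σ ε).prod (loopDagCarrier σ ε),
      (∀ y ∈ W, prodForm g x y = 0) → x ∈ W)
    (hdisj : Disjoint (loopDiag σ ε) W)
    (hsup : loopDiag σ ε ⊔ W = (loopCarrier σ ε).prod (loopDagCarrier σ ε))
    (hcomm : Commens W (stdW σ ε gp hC gm)) :
    Submodule.map (LinearMap.fst ℂ _ _) W ⊔
      (loopCarrier σ ε ⊓ Submodule.comap (daggerMap g) (Submodule.map (LinearMap.snd ℂ _ _) W))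
      = loopCarrier σ ε ∧
    ∃ e : ↥(Submodule.map (LinearMap.fst ℂ _ _) W ⊓
            (loopCarrier σ ε ⊓
              Submodule.comap (daggerMap g) (Submodule.map (LinearMap.snd ℂ _ _) W))) ≃ₗ[ℂ]
          (↥((Submodule.map (LinearMap.fst ℂ _ _) W).prod
              (Submodule.map (LinearMap.snd ℂ _ _) W)) ⧸
            Submodule.comap ((Submodule.map (LinearMap.fst ℂ _ _) W).prod
              (Submodule.map (LinearMap.snd ℂ _ _) W)).subtype W),
      ∀ (x : ↥(Submodule.map (LinearMap.fst ℂ _ _) W ⊓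
            (loopCarrier σ ε ⊓
              Submodule.comap (daggerMap g) (Submodule.map (LinearMap.snd ℂ _ _) W))))
        (y : ↥((Submodule.map (LinearMap.fst ℂ _ _) W).prod
              (Submodule.map (LinearMap.snd ℂ _ _) W))),
        (y : LoopAlg g × LoopAlg g) = ((x : LoopAlg g), daggerMap g (x : LoopAlg g)) →
          e x = Submodule.Quotient.mk y :=
  maninTriple_V_sum_and_quotient_general σ ε W hdisj hsup
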